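/- For the product construction on lattice tree automata, with lambda transitions λ ⊓ λ' → (q,q') whenever λ → q ∈ Δ, λ' → q' ∈ Δ' and λ ⊓ λ' ≠ ⊥, and ground transitions f((q₁,q₁'),…,(qₙ,qₙ')) → (q,q') built from pairs of transitions, the recognized language of the product automaton with final states Q_f × Q_f' equals L(A) ∩ L(A'). -/
import Mathlib


/-- Terms over signature `F` with arities `ar` and leaves in `Λ`. -/
inductive LTerm (F : Type) (ar : F → ℕ) (Λ : Type) : Type where
  | leaf : Λ → LTerm F ar Λ
  | node : (f : F) → (Fin (ar f) → LTerm F ar Λ) → LTerm F ar Λ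

/-- A lattice tree automaton with final states. -/
structure LTA (F : Type) (ar : F → ℕ) (Λ Q : Type) where
  lam : Λ → Q → Prop
  gnd : (f : F) → (Fin (ar f) → Q) → Q → Prop
  final : Set Q

variable {F : Type} {ar : F → ℕ} {Λ Q Q' : Type}

/-- Structural order ⊑ on terms, extending the lattice order at the leaves. -/
inductive TOrd [Lattice Λ] [OrderBot Λ] : LTerm F ar Λ → LTerm F ar Λ → Prop where
  | leaf {a b : Λ} : a ≤ b → TOrd (.leaf a) (.leaf b)
  | node {f : F} {s t : Fin (ar f) → LTerm F ar Λ} :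
      (∀ i, TOrd (s i) (t i)) → TOrd (.node f s) (.node f t)

/-- Runs of an LTA. -/
inductive Run [Lattice Λ] [OrderBot Λ] (A : LTA F ar Λ Q) :
    LTerm F ar Λ → Q → Prop where
  | leaf {a l : Λ} {q : Q} : A.lam l q → a ≤ l → Run A (.leaf a) q
  | node {f : F} {ts : Fin (ar f) → LTerm F ar Λ} {qs : Fin (ar f) → Q} {q : Q} :
      A.gnd f qs q → (∀ i, Run A (ts i) (qs i)) → Run A (.node f ts) q

/-- A term all of whose leaves are atoms of the lattice. -/
def AtomTerm [Lattice Λ] [OrderBot Λ] : LTerm F ar Λ → Prop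
  | .leaf a => IsAtom a
  | .node _ ts => ∀ i, AtomTerm (ts i)

/-- The language of an LTA: atom-labelled terms t such that t ⊑ t' for some
t' recognized in a final state. -/
def Lang [Lattice Λ] [OrderBot Λ] (A : LTA F ar Λ Q) : Set (LTerm F ar Λ) :=
  {t | AtomTerm t ∧ ∃ q ∈ A.final, ∃ t', TOrd t t' ∧ Run A t' q}

/-- The product LTA: lambda transitions λ ⊓ λ' → (q,q') for λ → q ∈ Δ and
λ' → q' ∈ Δ' with λ ⊓ λ' ≠ ⊥, ground transitions built from pairs of
transitions, final states Q_f × Q_f'. -/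
def prodLTA [Lattice Λ] [OrderBot Λ] (A : LTA F ar Λ Q) (B : LTA F ar Λ Q') :
    LTA F ar Λ (Q × Q') where
  lam l p := ∃ l₁ l₂, A.lam l₁ p.1 ∧ B.lam l₂ p.2 ∧ l₁ ⊓ l₂ ≠ ⊥ ∧ l = l₁ ⊓ l₂
  gnd f qs p := ∃ qs₁ qs₂, A.gnd f qs₁ p.1 ∧ B.gnd f qs₂ p.2 ∧
      qs = fun i => (qs₁ i, qs₂ i)
  final := A.final ×ˢ B.final

/-- Correctness of the product construction: the product LTA recognizes
exactly L(A) ∩ L(A'). -/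
theorem stmt12 [Lattice Λ] [OrderBot Λ] (A : LTA F ar Λ Q) (B : LTA F ar Λ Q') :
    Lang (prodLTA A B) = Lang A ∩ Lang B := by
  have fwd : ∀ t (p : Q × Q'), Run (prodLTA A B) t p → Run A t p.1 ∧ Run B t p.2 := by
    intro t p h
    induction h with
    | leaf hl hle =>
      obtain ⟨l₁, l₂, h1, h2, _, rfl⟩ := hl
      exact ⟨Run.leaf h1 (hle.trans inf_le_left), Run.leaf h2 (hle.trans inf_le_right)⟩
    | node hg _ ih =>
      obtain ⟨qs₁, qs₂, h1, h2, rfl⟩ := hg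
      exact ⟨Run.node h1 fun i => (ih i).1, Run.node h2 fun i => (ih i).2⟩
  have bwd : ∀ t, AtomTerm t → ∀ t₁ (q : Q), TOrd t t₁ → Run A t₁ q →
      ∀ t₂ (q' : Q'), TOrd t t₂ → Run B t₂ q' → Run (prodLTA A B) t (q, q') := by
    intro t
    induction t with
    | leaf a =>
      intro ha t₁ q ho1 hr1 t₂ q' ho2 hr2
      cases ho1 with
      | leaf hab1 =>
        cases ho2 with
        | leaf hab2 =>
          cases hr1 with
          | leaf hl1 hle1 =>
            cases hr2 with
            | leaf hl2 hle2 =>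
              refine Run.leaf (A := prodLTA A B) (l := _ ⊓ _)
                ⟨_, _, hl1, hl2, ?_, rfl⟩ (le_inf (hab1.trans hle1) (hab2.trans hle2))
              intro hbot
              exact ha.1 (le_bot_iff.mp (hbot ▸ le_inf (hab1.trans hle1) (hab2.trans hle2)))
    | node f ts ih =>
      intro ha t₁ q ho1 hr1 t₂ q' ho2 hr2
      cases ho1 with
      | node hs1 =>
        cases ho2 with
        | node hs2 =>
          cases hr1 with
          | node hg1 hrs1 =>
            cases hr2 with
            | node hg2 hrs2 =>
              exact Run.node ⟨_, _, hg1, hg2, rfl⟩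
                fun i => ih i (ha i) _ _ (hs1 i) (hrs1 i) _ _ (hs2 i) (hrs2 i)
  ext t
  constructor
  · rintro ⟨hat, ⟨q, q'⟩, hf, t', ho, hr⟩
    obtain ⟨h1, h2⟩ := fwd t' _ hr
    exact ⟨⟨hat, q, hf.1, t', ho, h1⟩, ⟨hat, q', hf.2, t', ho, h2⟩⟩
  · rintro ⟨⟨hat, q, hf1, t₁, ho1, hr1⟩, ⟨-, q', hf2, t₂, ho2, hr2⟩⟩
    have hrefl : TOrd t t := by
      clear * -
      induction t with
      | leaf a => exact TOrd.leaf le_rfl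
      | node f ts ih => exact TOrd.node ih
    exact ⟨hat, (q, q'), ⟨hf1, hf2⟩, t, hrefl, bwd t hat _ q ho1 hr1 _ q' ho2 hr2⟩
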